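/- arXiv:2507.10169 — 2 statements merged into one kernel-verified Lean document; each statement's English description precedes it below -/
import Mathlib

section
/- Every α in Z^{1,9} with α·ω_0 = 0, α^2 = -2, and 0 ≤ α·ω_d ≤ min(d-1, 6) where ω_d = 3h - (e_1+...+e_n), n = 9-d, and α·ω_d ≥ 1, is of one of the forms: e_i - e_j with i ≠ j; h - e_J with J a 3-element subset of {1,...,9}; 2h - e_J with J a 6-element subset of {1,...,9}; or ω_0 - e_i + e_j with i ≠ j (the latter only when α·ω_d = d-1 ≤ 6), where e_J = Σ_{i∈J} e_i. -/
open Finset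

/-- The lattice `Z^{1,9}` as integer vectors indexed by `Fin 10`:
coordinate `0` is `h`, coordinates `1,…,9` are `e_1,…,e_9`. -/
abbrev V : Type := Fin 10 → ℤ

/-- The Minkowski bilinear form: `h·h = 1`, `e_i·e_i = -1`, distinct basis vectors orthogonal. -/
def form (v w : V) : ℤ := v 0 * w 0 - ∑ i : Fin 9, v i.succ * w i.succ

/-- The basis vector `h`. -/
def hvec : V := Pi.single 0 1

/-- The basis vector `e_{i+1}` (so `evec i` for `i : Fin 9` is `e_1,…,e_9`). -/
def evec (i : Fin 9) : V := Pi.single i.succ 1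

/-- `ω_d = 3h - (e_1 + … + e_n)`, recorded as a function of `n`. -/
def omegaV (n : ℕ) : V :=
  (3 : ℤ) • hvec - ∑ i ∈ Finset.univ.filter (fun i : Fin 9 => (i : ℕ) < n), evec i

/-- `ω_0 = 3h - (e_1 + … + e_9)`. -/
def omega0 : V := omegaV 9

/-!
The map `α ↦ (3 α_i + α_0)_i` (`modOmega0`) has kernel `ℤ ω_0`. On a root `α` of `ω_0^⊥` its
image `u` has `∑ u_i = 0`, `∑ u_i² = 18` and all `u_i ≡ α_0 (mod 3)`; such integer vectors are
`3 (δ_p - δ_q)` or `r - 3·1_J` with `r ∈ {1, 2}`, `|J| = 3r`. Hence `α = β + k ω_0` with `β` one of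
`e_p - e_q`, `h - e_J`, `2h - e_J`, and `α·ω_d = k d + β·ω_d` since `ω_0·ω_d = d`. For the last two
`0 ≤ β·ω_d ≤ d`, so `1 ≤ α·ω_d ≤ d - 1` forces `k = 0`; for `e_p - e_q` we have `|β·ω_d| ≤ 1`,
which also allows `k = 1`, `β·ω_d = -1`, i.e. `α = ω_0 - e_q + e_p`.
-/

@[simp] lemma hvec_zero : hvec 0 = 1 := rfl

@[simp] lemma hvec_succ (j : Fin 9) : hvec j.succ = 0 :=
  Pi.single_eq_of_ne (Fin.succ_ne_zero j) 1

@[simp] lemma evec_zero (i : Fin 9) : evec i 0 = 0 :=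
  Pi.single_eq_of_ne (Fin.succ_ne_zero i).symm 1

@[simp] lemma evec_succ (i j : Fin 9) : evec i j.succ = if j = i then 1 else 0 := by
  simp [evec, Pi.single_apply, Fin.succ_inj]

@[simp] lemma omegaV_zero (n : ℕ) : omegaV n 0 = 3 := by
  simp [omegaV]

@[simp] lemma omegaV_succ (n : ℕ) (j : Fin 9) :
    omegaV n j.succ = if (j : ℕ) < n then -1 else 0 := by
  simp [omegaV, Finset.sum_apply, apply_ite]

@[simp] lemma omega0_zero : omega0 0 = 3 := omegaV_zero 9

@[simp] lemma omega0_succ (j : Fin 9) : omega0 j.succ = -1 := by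
  simp [omega0]

lemma form_sub_left (u v w : V) : form (u - v) w = form u w - form v w := by
  simp only [form, Pi.sub_apply, sub_mul, Finset.sum_sub_distrib]; ring

lemma form_smul_left (c : ℤ) (v w : V) : form (c • v) w = c * form v w := by
  simp only [form, Pi.smul_apply, smul_eq_mul, mul_assoc, ← Finset.mul_sum]; ring

lemma form_sum_left {ι : Type*} (s : Finset ι) (f : ι → V) (w : V) :
    form (∑ i ∈ s, f i) w = ∑ i ∈ s, form (f i) w := by
  simp only [form, Finset.sum_apply, Finset.sum_mul, Finset.sum_sub_distrib]
  rw [Finset.sum_comm]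

lemma form_hvec_omegaV (n : ℕ) : form hvec (omegaV n) = 3 := by
  simp [form]

lemma form_evec_omegaV (i : Fin 9) (n : ℕ) :
    form (evec i) (omegaV n) = if (i : ℕ) < n then 1 else 0 := by
  simp only [form, evec_zero, evec_succ, omegaV_succ, zero_mul, zero_sub, ite_mul, one_mul]
  rw [Finset.sum_ite_eq']
  simp [apply_ite]

lemma form_omega0_omegaV (n : ℕ) : form omega0 (omegaV n) = (9 - n : ℕ) := by
  simp [form, omega0, Finset.sum_boole, Fin.card_filter_val_lt]
  omega

def modOmega0 : V →+ (Fin 9 → ℤ) where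
  toFun α i := 3 * α i.succ + α 0
  map_zero' := by ext; simp
  map_add' α β := by ext; simp only [Pi.add_apply]; ring

lemma modOmega0_apply (α : V) (i : Fin 9) : modOmega0 α i = 3 * α i.succ + α 0 := rfl

lemma sum_modOmega0 (α : V) : ∑ i, modOmega0 α i = 3 * form α omega0 := by
  simp [modOmega0_apply, form, omega0, Finset.sum_add_distrib, ← Finset.mul_sum]
  ring

lemma sum_sq_modOmega0 (α : V) :
    ∑ i, modOmega0 α i ^ 2 = 6 * α 0 * form α omega0 - 9 * form α α := by
  simp [modOmega0_apply, form, omega0, add_sq, Finset.sum_add_distrib, ← Finset.mul_sum,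
    ← Finset.sum_mul, mul_pow, ← sq]
  ring

lemma modOmega0_emod_three (α : V) (i : Fin 9) : modOmega0 α i % 3 = α 0 % 3 := by
  rw [modOmega0_apply]; omega

lemma exists_eq_zsmul_omega0_of_modOmega0_eq_zero {x : V} (hx : modOmega0 x = 0) :
    ∃ k : ℤ, x = k • omega0 := by
  have hx' (i : Fin 9) : 3 * x i.succ + x 0 = 0 := congr_fun hx i
  have h1 : 3 * x 1 + x 0 = 0 := hx' 0
  refine ⟨-x 1, funext fun j => ?_⟩
  cases j using Fin.cases with
  | zero => simp; omega
  | succ i => have := hx' i; simp; omega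

lemma exists_sub_zsmul_omega0_eq {α β : V} (h : modOmega0 α = modOmega0 β) :
    ∃ k : ℤ, α - k • omega0 = β := by
  obtain ⟨k, hk⟩ := exists_eq_zsmul_omega0_of_modOmega0_eq_zero (x := α - β) (by simp [h])
  exact ⟨k, by rw [← hk, sub_sub_cancel]⟩

@[simp] lemma modOmega0_hvec : modOmega0 hvec = 1 := by
  ext i; simp [modOmega0_apply]

@[simp] lemma modOmega0_evec (p : Fin 9) : modOmega0 (evec p) = Pi.single p 3 := by
  ext i; simp [modOmega0_apply, Pi.single_apply]

lemma sq_add_card_sub_one_le_sum_sq {ι : Type*} [Fintype ι] [DecidableEq ι] {u : ι → ℤ}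
    (hu : ∀ i, u i ≠ 0) (j : ι) : u j ^ 2 + (Fintype.card ι - 1) ≤ ∑ i, u i ^ 2 := by
  have hrest := Finset.card_nsmul_le_sum (Finset.univ.erase j) (fun i => u i ^ 2) 1
    fun i _ => sq_pos_of_ne_zero (hu i)
  have hcard : 1 ≤ Fintype.card ι := Fintype.card_pos_iff.mpr ⟨j⟩
  rw [Finset.card_erase_of_mem (Finset.mem_univ j), Finset.card_univ, nsmul_one,
    Nat.cast_sub hcard, Nat.cast_one] at hrest
  rw [← Finset.add_sum_erase _ _ (Finset.mem_univ j)]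
  linarith

lemma exists_eq_single_sub_single {ι : Type*} [Fintype ι] [DecidableEq ι] {u : ι → ℤ}
    (h3 : ∀ i, 3 ∣ u i) (hsum : ∑ i, u i = 0) (hsq : ∑ i, u i ^ 2 = 18) :
    ∃ p q, p ≠ q ∧ u = Pi.single p 3 - Pi.single q 3 := by
  have hne : u ≠ 0 := by rintro rfl; simp at hsq
  have hsub (s : Finset ι) : ∑ i ∈ s, u i ^ 2 ≤ 18 :=
    hsq ▸ Finset.sum_le_sum_of_subset_of_nonneg (Finset.subset_univ s) fun i _ _ => sq_nonneg _
  obtain ⟨p, hp⟩ : ∃ p, 0 < u p := by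
    by_contra! h
    exact hne (funext ((Finset.sum_eq_zero_iff_of_nonpos fun i _ => h i).mp hsum · (by simp)))
  obtain ⟨q, hq⟩ : ∃ q, u q < 0 := by
    by_contra! h
    exact hne (funext ((Finset.sum_eq_zero_iff_of_nonneg fun i _ => h i).mp hsum · (by simp)))
  have hpq : p ≠ q := by rintro rfl; omega
  have hpq' := hsub {p, q}
  rw [Finset.sum_pair hpq] at hpq'
  obtain ⟨a, ha⟩ := h3 p
  obtain ⟨b, hb⟩ := h3 q
  rw [ha, hb] at hpq'
  have hup : u p = 3 := by nlinarith [show 1 ≤ a by omega, show b ≤ -1 by omega]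
  have huq : u q = -3 := by nlinarith [show 1 ≤ a by omega, show b ≤ -1 by omega]
  refine ⟨p, q, hpq, funext fun i => ?_⟩
  by_cases hip : i = p
  · subst hip; simp [hup, hpq]
  by_cases hiq : i = q
  · subst hiq; simp [huq, hip]
  have hi := hsub {i, p, q}
  rw [Finset.sum_insert (by simp [hip, hiq]), Finset.sum_pair hpq, hup, huq] at hi
  simpa [hip, hiq] using pow_eq_zero_iff two_ne_zero |>.mp (by nlinarith [sq_nonneg (u i)])

lemma exists_eq_sub_ite_mem {u : Fin 9 → ℤ} {r : ℤ} (hr : r = 1 ∨ r = 2)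
    (hmod : ∀ i, u i % 3 = r) (hsum : ∑ i, u i = 0) (hsq : ∑ i, u i ^ 2 = 18) :
    ∃ J : Finset (Fin 9), (J.card : ℤ) = 3 * r ∧ u = fun i => r - if i ∈ J then 3 else 0 := by
  have hval (i : Fin 9) : u i = r - 3 ∨ u i = r := by
    have hbound := sq_add_card_sub_one_le_sum_sq (u := u) (fun j => by have := hmod j; omega) i
    simp only [Fintype.card_fin, hsq, Nat.cast_ofNat] at hbound
    have : u i ≤ 3 := by nlinarith
    have : -3 ≤ u i := by nlinarith
    have := hmod i
    omega
  set J : Finset (Fin 9) := {i | u i = r - 3}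
  have hu : u = fun i => r - if i ∈ J then 3 else 0 := by
    ext i
    rcases hval i with h | h <;> simp [J, h, show r ≠ r - 3 by omega]
  refine ⟨J, ?_, hu⟩
  rw [hu] at hsum
  simp [Finset.sum_sub_distrib, Finset.sum_ite_mem] at hsum
  linarith

lemma modOmega0_smul_hvec_sub_sum_evec (r : ℤ) (J : Finset (Fin 9)) :
    modOmega0 (r • hvec - ∑ i ∈ J, evec i) = fun i => r - if i ∈ J then 3 else 0 := by
  ext i
  simp only [map_sub, map_zsmul, map_sum, modOmega0_hvec, modOmega0_evec, Pi.sub_apply,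
    Pi.smul_apply, Pi.one_apply, smul_eq_mul, mul_one, Finset.sum_apply, Pi.single_apply]
  rw [Finset.sum_ite_eq]

theorem exists_sub_zsmul_omega0_eq_of_root {α : V} (h0 : form α omega0 = 0)
    (h2 : form α α = -2) :
    ∃ k : ℤ, (∃ i j, i ≠ j ∧ α - k • omega0 = evec i - evec j) ∨
      (∃ J : Finset (Fin 9), J.card = 3 ∧ α - k • omega0 = hvec - ∑ i ∈ J, evec i) ∨
      (∃ J : Finset (Fin 9), J.card = 6 ∧ α - k • omega0 = (2 : ℤ) • hvec - ∑ i ∈ J, evec i) := by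
  have hsum : ∑ i, modOmega0 α i = 0 := by rw [sum_modOmega0, h0, mul_zero]
  have hsq : ∑ i, modOmega0 α i ^ 2 = 18 := by rw [sum_sq_modOmega0, h0, h2]; ring
  have hmod := modOmega0_emod_three α
  rcases (by omega : α 0 % 3 = 0 ∨ α 0 % 3 = 1 ∨ α 0 % 3 = 2) with h | h | h
  · obtain ⟨p, q, hpq, hu⟩ := exists_eq_single_sub_single
      (fun i => Int.dvd_of_emod_eq_zero ((hmod i).trans h)) hsum hsq
    obtain ⟨k, hk⟩ := exists_sub_zsmul_omega0_eq (α := α) (β := evec p - evec q) (by simp [hu])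
    exact ⟨k, .inl ⟨p, q, hpq, hk⟩⟩
  · obtain ⟨J, hJ, hu⟩ := exists_eq_sub_ite_mem (.inl rfl) (fun i => (hmod i).trans h) hsum hsq
    obtain ⟨k, hk⟩ := exists_sub_zsmul_omega0_eq (β := (1 : ℤ) • hvec - ∑ i ∈ J, evec i)
      (by rw [hu, modOmega0_smul_hvec_sub_sum_evec])
    exact ⟨k, .inr (.inl ⟨J, by omega, by simpa using hk⟩)⟩
  · obtain ⟨J, hJ, hu⟩ := exists_eq_sub_ite_mem (.inr rfl) (fun i => (hmod i).trans h) hsum hsq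
    obtain ⟨k, hk⟩ := exists_sub_zsmul_omega0_eq (β := (2 : ℤ) • hvec - ∑ i ∈ J, evec i)
      (by rw [hu, modOmega0_smul_hvec_sub_sum_evec])
    exact ⟨k, .inr (.inr ⟨J, by omega, hk⟩)⟩

lemma form_sum_evec_omegaV (J : Finset (Fin 9)) (n : ℕ) :
    form (∑ i ∈ J, evec i) (omegaV n) = #{i ∈ J | i.val < n} := by
  simp [form_sum_left, form_evec_omegaV, Finset.sum_boole]

lemma card_le_card_filter_lt_add (J : Finset (Fin 9)) (n : ℕ) :
    #J ≤ #{i ∈ J | i.val < n} + (9 - n) := by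
  have hout : #{i ∈ J | ¬ i.val < n} ≤ #{i : Fin 9 | ¬ i.val < n} :=
    Finset.card_le_card (Finset.filter_subset_filter _ (Finset.subset_univ J))
  have hall :=
    Finset.card_filter_add_card_filter_not (s := Finset.univ) (fun i : Fin 9 => i.val < n)
  rw [Fin.card_filter_val_lt, Finset.card_univ, Fintype.card_fin] at hall
  have := Finset.card_filter_add_card_filter_not (s := J) (fun i : Fin 9 => i.val < n)
  omega

lemma form_smul_hvec_sub_sum_evec_omegaV_mem_Icc {c : ℤ} {J : Finset (Fin 9)}
    (hJ : (#J : ℤ) = 3 * c) (n : ℕ) :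
    0 ≤ form (c • hvec - ∑ i ∈ J, evec i) (omegaV n) ∧
      form (c • hvec - ∑ i ∈ J, evec i) (omegaV n) ≤ (9 - n : ℕ) := by
  rw [form_sub_left, form_smul_left, form_hvec_omegaV, form_sum_evec_omegaV]
  have := card_le_card_filter_lt_add J n
  have := Finset.card_le_card (Finset.filter_subset (fun i : Fin 9 => i.val < n) J)
  omega

lemma eq_zero_of_mul_add_mem_Ioo {k d t : ℤ} (ht : 0 ≤ t) (htd : t ≤ d)
    (h1 : 0 < k * d + t) (h2 : k * d + t < d) : k = 0 := by
  rcases lt_trichotomy k 0 with hk | hk | hk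
  · nlinarith
  · exact hk
  · nlinarith

lemma eq_zero_or_eq_one_of_mul_add_mem_Ioo {k d t : ℤ} (hd : 0 < d) (ht : |t| ≤ 1)
    (h1 : 0 < k * d + t) (h2 : k * d + t < d) : k = 0 ∨ k = 1 ∧ t = -1 := by
  rw [abs_le] at ht
  rcases lt_trichotomy k 0 with hk | hk | hk
  · nlinarith
  · exact .inl hk
  · rcases (by omega : k = 1 ∨ 2 ≤ k) with rfl | hk2
    · exact .inr ⟨rfl, by linarith⟩
    · nlinarith

/-- enumeration of the real roots `α` with `1 ≤ α·ω_d ≤ min (d-1) 6`. -/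
theorem stmt_4 (d : ℕ) (hd1 : 1 ≤ d) (hd9 : d ≤ 9) (n : ℕ) (hn : n = 9 - d)
    (α : V) (h0 : form α omega0 = 0) (h2 : form α α = -2)
    (hm1 : 1 ≤ form α (omegaV n))
    (hm2 : form α (omegaV n) ≤ min ((d : ℤ) - 1) 6) :
    (∃ i j : Fin 9, i ≠ j ∧ α = evec i - evec j) ∨
    (∃ J : Finset (Fin 9), J.card = 3 ∧ α = hvec - ∑ i ∈ J, evec i) ∨
    (∃ J : Finset (Fin 9), J.card = 6 ∧ α = (2 : ℤ) • hvec - ∑ i ∈ J, evec i) ∨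
    (form α (omegaV n) = (d : ℤ) - 1 ∧ (d : ℤ) - 1 ≤ 6 ∧
      ∃ i j : Fin 9, i ≠ j ∧ α = omega0 - evec i + evec j) := by
  have hdn : ((9 - n : ℕ) : ℤ) = d := by omega
  obtain ⟨k, hβ⟩ := exists_sub_zsmul_omega0_eq_of_root h0 h2
  have hm : form α (omegaV n) = k * d + form (α - k • omega0) (omegaV n) := by
    rw [form_sub_left, form_smul_left, form_omega0_omegaV, hdn]; ring
  have hpos : 0 < k * d + form (α - k • omega0) (omegaV n) := by omega
  have hlt : k * d + form (α - k • omega0) (omegaV n) < d := by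
    have := hm2.trans (min_le_left _ _); omega
  rcases hβ with ⟨i, j, hij, hβ⟩ | ⟨J, hJ, hβ⟩ | ⟨J, hJ, hβ⟩
  · have ht : |form (α - k • omega0) (omegaV n)| ≤ 1 := by
      rw [hβ, form_sub_left, form_evec_omegaV, form_evec_omegaV, abs_le]; split_ifs <;> simp
    rcases eq_zero_or_eq_one_of_mul_add_mem_Ioo (by omega) ht hpos hlt with rfl | ⟨rfl, ht⟩
    · exact .inl ⟨i, j, hij, by simpa using hβ⟩
    · refine .inr (.inr (.inr ⟨by omega, ?_, j, i, hij.symm, ?_⟩))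
      · have := hm2.trans (min_le_right _ _); omega
      · rw [one_smul, sub_eq_iff_eq_add] at hβ
        rw [hβ]; abel
  · have ht := form_smul_hvec_sub_sum_evec_omegaV_mem_Icc (c := 1) (J := J) (by simp [hJ]) n
    rw [one_smul, ← hβ, hdn] at ht
    obtain rfl := eq_zero_of_mul_add_mem_Ioo ht.1 ht.2 hpos hlt
    exact .inr (.inl ⟨J, hJ, by simpa using hβ⟩)
  · have ht := form_smul_hvec_sub_sum_evec_omegaV_mem_Icc (c := 2) (J := J) (by simp [hJ]) n
    rw [← hβ, hdn] at ht
    obtain rfl := eq_zero_of_mul_add_mem_Ioo ht.1 ht.2 hpos hlt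
    exact .inr (.inr (.inl ⟨J, hJ, by simpa using hβ⟩))
end

section
/- In Z^{1,9} with the Minkowski form, the sublattice ω_d^⊥ ∩ Z^{1,n} (vectors in span(h, e_1, ..., e_n) orthogonal to ω_d = 3h - (e_1+...+e_n)) is negative definite and contains no vector v with v^2 = -1, for each 1 ≤ n ≤ 8. -/
open Finset

/-- `v` lies in `Z^{1,n}`, the span of `h, e_1, …, e_n`. -/
def inSpan1 (n : ℕ) (v : V) : Prop := ∀ j : Fin 10, n < (j : ℕ) → v j = 0

/-- the sublattice `ω_d^⊥ ∩ Z^{1,n}` is negative definite and contains no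
vector of square `-1`, for `1 ≤ n ≤ 8`. -/
theorem stmt_7 (n : ℕ) (hn1 : 1 ≤ n) (hn8 : n ≤ 8)
    (v : V) (hv : inSpan1 n v) (hperp : form (omegaV n) v = 0) :
    (v ≠ 0 → form v v < 0) ∧ form v v ≠ -1 := by
  have hω0 : omegaV n 0 = 3 := by
    simp [omegaV, hvec, evec, Finset.sum_apply, Pi.single_apply, (Fin.succ_ne_zero _).symm]
  have hωs : ∀ i : Fin 9, omegaV n i.succ = if (i : ℕ) < n then -1 else 0 := by
    intro i
    simp only [omegaV, Pi.sub_apply, Pi.smul_apply, hvec, evec, Finset.sum_apply,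
      Pi.single_apply, Fin.succ_inj, smul_eq_mul]
    rw [Finset.sum_ite_eq]
    by_cases h : (i : ℕ) < n <;> simp [h, Fin.succ_ne_zero]
  have hv' : ∀ i : Fin 9, n ≤ (i : ℕ) → v i.succ = 0 := by
    intro i hi
    exact hv i.succ (by simp [Fin.val_succ]; omega)
  -- the key linear relation
  have hS : 3 * v 0 + ∑ i : Fin 9, v i.succ = 0 := by
    have := hperp
    unfold form at this
    rw [hω0] at this
    have he : ∀ i : Fin 9, omegaV n i.succ * v i.succ = -(v i.succ) := by
      intro i
      rw [hωs i]
      by_cases h : (i : ℕ) < n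
      · simp [h]
      · simp [h, hv' i (le_of_not_gt h)]
    rw [Finset.sum_congr rfl (fun i _ => he i)] at this
    rw [Finset.sum_neg_distrib] at this
    linarith
  set S := ∑ i : Fin 9, v i.succ with hSdef
  set Q := ∑ i : Fin 9, v i.succ * v i.succ with hQdef
  have hform : form v v = v 0 * v 0 - Q := rfl
  have hQnn : 0 ≤ Q := Finset.sum_nonneg (fun i _ => mul_self_nonneg _)
  -- Cauchy-Schwarz with the last coordinate removed
  have h8 : v (⟨8, by norm_num⟩ : Fin 9).succ = 0 := hv' _ (by simpa using hn8)
  have hCS : S ^ 2 ≤ 8 * Q := by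
    have hrw : ∀ (f : Fin 9 → ℤ), f ⟨8, by norm_num⟩ = 0 →
        ∑ i : Fin 9, f i = ∑ i ∈ Finset.univ.erase (⟨8, by norm_num⟩ : Fin 9), f i := by
      intro f hf
      rw [Finset.sum_erase _ hf]
    have h1 : S = ∑ i ∈ Finset.univ.erase (⟨8, by norm_num⟩ : Fin 9), v i.succ :=
      hrw _ h8
    have h2 : Q = ∑ i ∈ Finset.univ.erase (⟨8, by norm_num⟩ : Fin 9), v i.succ * v i.succ :=
      hrw _ (by rw [h8]; ring)
    have hcard : (Finset.univ.erase (⟨8, by norm_num⟩ : Fin 9)).card = 8 := by decide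
    have := sq_sum_le_card_mul_sum_sq
      (s := Finset.univ.erase (⟨8, by norm_num⟩ : Fin 9)) (f := fun i => v i.succ)
    rw [hcard] at this
    rw [h1, h2]
    calc (∑ i ∈ Finset.univ.erase (⟨8, by norm_num⟩ : Fin 9), v i.succ) ^ 2
        ≤ (8 : ℤ) * ∑ i ∈ Finset.univ.erase (⟨8, by norm_num⟩ : Fin 9), (v i.succ) ^ 2 := by
          exact_mod_cast this
      _ = 8 * ∑ i ∈ Finset.univ.erase (⟨8, by norm_num⟩ : Fin 9), v i.succ * v i.succ := by
          simp [sq]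
  constructor
  · intro hne
    rw [hform]
    rcases eq_or_lt_of_le hQnn with hQ0 | hQpos
    · exfalso
      have hall : ∀ i : Fin 9, v i.succ = 0 := by
        intro i
        have := (Finset.sum_eq_zero_iff_of_nonneg
          (fun i _ => mul_self_nonneg (v i.succ))).1 hQ0.symm i (Finset.mem_univ i)
        exact mul_self_eq_zero.mp this
      have hS0 : S = 0 := Finset.sum_eq_zero (fun i _ => hall i)
      have hv0 : v 0 = 0 := by linarith [hS, hS0]
      apply hne
      funext j
      refine Fin.cases ?_ ?_ j
      · exact hv0
      · exact hall
    · have h9 : 9 * (v 0 * v 0) = S ^ 2 := by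
        have : S = -(3 * v 0) := by linarith [hS]
        rw [this]; ring
      nlinarith [hCS]
  · intro hcon
    rw [hform] at hcon
    -- parity argument: S ≡ Q (mod 2), S = -3 v0, Q = v0^2 + 1
    have hpar : Even (S - Q) := by
      rw [hSdef, hQdef, ← Finset.sum_sub_distrib]
      apply Finset.even_sum
      intro i _
      have : v i.succ - v i.succ * v i.succ = -((v i.succ - 1) * (v i.succ - 1 + 1)) := by ring
      rw [this]
      exact (Int.even_mul_succ_self (v i.succ - 1)).neg
    obtain ⟨a, ha⟩ := hpar
    obtain ⟨b, hb⟩ := Int.even_mul_succ_self (v 0)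
    have hQv : Q = v 0 * v 0 + 1 := by linarith
    have hSv : S = -(3 * v 0) := by linarith [hS]
    rw [hSv, hQv] at ha
    have hb' : v 0 * v 0 + v 0 = b + b := by linarith [hb, mul_add (v 0) (v 0) 1, mul_one (v 0)]
    have key : -2 * v 0 - 1 = 2 * a + 2 * b := by nlinarith [ha, hb']
    omega
end
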